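/- Let X and Y be n×n positive definite Hermitian matrices with X ≤ e^d Y and Y ≤ e^d X in the Löwner order for some d ≥ 0. Then ‖X - Y‖_F ≤ ((e^d - 1)/√(e^{2d} + 1)) · √(‖X‖_F² + ‖Y‖_F²). -/

import Mathlib

/-!
Put `t = exp d`. The matrices `t • X - Y` and `t • Y - X` are positive semidefinite, and the
trace of a product of two positive semidefinite matrices is nonnegative, so
`t (‖X‖² + ‖Y‖²) ≤ (t² + 1) Re tr (X Y)`. Since `‖X - Y‖² = ‖X‖² + ‖Y‖² - 2 Re tr (X Y)`,
this gives `‖X - Y‖² ≤ (1 - 2t / (t² + 1)) (‖X‖² + ‖Y‖²) = (t - 1)² / (t² + 1) (‖X‖² + ‖Y‖²)`.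
-/

open Matrix
open scoped ComplexOrder

noncomputable def frobNorm {n : ℕ} (A : Matrix (Fin n) (Fin n) ℂ) : ℝ :=
  Real.sqrt (Matrix.trace (Aᴴ * A)).re

section RCLike

variable {𝕜 ι : Type*} [RCLike 𝕜] [Fintype ι]

open scoped MatrixOrder in
theorem Matrix.PosSemidef.trace_mul_nonneg {A B : Matrix ι ι 𝕜}
    (hA : A.PosSemidef) (hB : B.PosSemidef) : 0 ≤ (A * B).trace := by
  classical
  obtain ⟨C, rfl⟩ := CStarAlgebra.nonneg_iff_eq_star_mul_self.mp hA.nonneg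
  rw [star_eq_conjTranspose, Matrix.mul_assoc, trace_mul_comm]
  exact (hB.mul_mul_conjTranspose_same C).trace_nonneg

theorem mul_re_trace_add_le_re_trace_mul {X Y : Matrix ι ι 𝕜} {t : ℝ}
    (hXY : (t • X - Y).PosSemidef) (hYX : (t • Y - X).PosSemidef) :
    t * (RCLike.re (X * X).trace + RCLike.re (Y * Y).trace) ≤
      (t ^ 2 + 1) * RCLike.re (X * Y).trace := by
  have hprod : (t • X - Y) * (t • Y - X) =
      (t ^ 2 + 1 : ℝ) • (X * Y) - t • (X * X + Y * Y) + (Y * X - X * Y) := by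
    simp only [Matrix.sub_mul, Matrix.mul_sub, Matrix.smul_mul, Matrix.mul_smul]
    module
  have hnonneg := RCLike.nonneg_iff.mp (hXY.trace_mul_nonneg hYX) |>.1
  rw [hprod, trace_add, trace_sub, trace_sub, trace_mul_comm Y X, sub_self, add_zero,
    trace_smul, trace_smul, trace_add, map_sub, RCLike.smul_re, RCLike.smul_re, map_add]
    at hnonneg
  linarith

end RCLike

theorem frobNorm_nonneg {n : ℕ} (A : Matrix (Fin n) (Fin n) ℂ) : 0 ≤ frobNorm A :=
  Real.sqrt_nonneg _

theorem frobNorm_sq_of_isHermitian {n : ℕ} {A : Matrix (Fin n) (Fin n) ℂ} (hA : A.IsHermitian) :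
    frobNorm A ^ 2 = (A * A).trace.re := by
  have hnonneg := Complex.nonneg_iff.mp (posSemidef_conjTranspose_mul_self A).trace_nonneg |>.1
  rw [frobNorm, Real.sq_sqrt hnonneg, hA.eq]

theorem frobNorm_sub_sq {n : ℕ} {X Y : Matrix (Fin n) (Fin n) ℂ}
    (hX : X.IsHermitian) (hY : Y.IsHermitian) :
    frobNorm (X - Y) ^ 2 = frobNorm X ^ 2 + frobNorm Y ^ 2 - 2 * (X * Y).trace.re := by
  rw [frobNorm_sq_of_isHermitian (hX.sub hY), frobNorm_sq_of_isHermitian hX,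
    frobNorm_sq_of_isHermitian hY, Matrix.sub_mul, Matrix.mul_sub, Matrix.mul_sub,
    trace_sub, trace_sub, trace_sub, trace_mul_comm Y X]
  simp only [Complex.sub_re]
  ring

theorem stmt12 {n : ℕ} {X Y : Matrix (Fin n) (Fin n) ℂ}
    (hX : X.PosDef) (hY : Y.PosDef) (d : ℝ) (hd : 0 ≤ d)
    (h₁ : (Real.exp d • Y - X).PosSemidef) (h₂ : (Real.exp d • X - Y).PosSemidef) :
    frobNorm (X - Y) ≤
      (Real.exp d - 1) / Real.sqrt (Real.exp (2 * d) + 1) *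
        Real.sqrt (frobNorm X ^ 2 + frobNorm Y ^ 2) := by
  set t := Real.exp d
  have ht : 1 ≤ t := Real.one_le_exp hd
  have hexp : Real.exp (2 * d) = t ^ 2 := by rw [← Real.exp_nat_mul]; norm_num
  have key := mul_re_trace_add_le_re_trace_mul h₂ h₁
  simp only [RCLike.re_to_complex] at key
  rw [← frobNorm_sq_of_isHermitian hX.isHermitian, ← frobNorm_sq_of_isHermitian hY.isHermitian]
    at key
  have hden : 0 < t ^ 2 + 1 := by positivity
  have hsq : frobNorm (X - Y) ^ 2 ≤
      (t - 1) ^ 2 / (t ^ 2 + 1) * (frobNorm X ^ 2 + frobNorm Y ^ 2) := by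
    rw [frobNorm_sub_sq hX.isHermitian hY.isHermitian, div_mul_eq_mul_div, le_div_iff₀ hden]
    nlinarith
  rw [hexp]
  refine (pow_le_pow_iff_left₀ (frobNorm_nonneg _) ?_ two_ne_zero).mp ?_
  · exact mul_nonneg (div_nonneg (sub_nonneg.2 ht) (Real.sqrt_nonneg _)) (Real.sqrt_nonneg _)
  · rwa [mul_pow, div_pow, Real.sq_sqrt hden.le, Real.sq_sqrt (by positivity)]
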